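/- For any nonempty N ⊆ [n], quantity q > 0, and load vector ℓ ∈ ℝ^n_{≥0}, the allocation x* ∈ Δ(N,q) selected by water-filling (maximizing min_{i∈N}(x(i) + ℓ(i)) over x ∈ Δ(N,q)) satisfies: (Uniqueness) x* + ℓ is the unique majorization-minimal vector in the set {x + ℓ : x ∈ Δ(N,q)}; and (Equalized loads) for all i, j in the support N̂ = {i ∈ N : x*(i) > 0}, x*(i) + ℓ(i) = x*(j) + ℓ(j). -/

import Mathlib

open Finset MeasureTheory

/-- A request sequence with `n` offline nodes and `m` online nodes: each online
node `t` has a nonempty neighborhood `N t ⊆ [n]` and a positive quantity `q t`. -/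
structure ReqSeq (n m : ℕ) where
  N : Fin m → Finset (Fin n)
  q : Fin m → ℝ
  N_nonempty : ∀ t, (N t).Nonempty
  q_pos : ∀ t, 0 < q t

/-- `Δ(N, q)`: feasible allocations for a single online node. -/
def allocSet (n : ℕ) (N : Finset (Fin n)) (qt : ℝ) : Set (Fin n → ℝ) :=
  {x | (∀ i, 0 ≤ x i) ∧ (∀ i, i ∉ N → x i = 0) ∧ ∑ i, x i = qt}

/-- A feasible allocation trajectory on a request sequence. -/
def Feasible {n m : ℕ} (E : ReqSeq n m) (x : Fin m → Fin n → ℝ) : Prop :=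
  ∀ t, x t ∈ allocSet n (E.N t) (E.q t)

/-- `Δ(E)`: the Minkowski sum of the per-node allocation sets (feasible load vectors). -/
def loads {n m : ℕ} (E : ReqSeq n m) : Set (Fin n → ℝ) :=
  {ℓ | ∃ x, Feasible E x ∧ ℓ = ∑ t, x t}

/-- Sum of the `k` largest entries of `x`. -/
noncomputable def topSum {n : ℕ} (x : Fin n → ℝ) (k : ℕ) : ℝ :=
  sSup ((fun s : Finset (Fin n) => ∑ i ∈ s, x i) '' {s | s.card = k})

/-- `Majorizes x y` means `x ⪰ y`: equal total sums and every `k`-largest-entries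
sum of `x` dominates that of `y`. -/
def Majorizes {n : ℕ} (x y : Fin n → ℝ) : Prop :=
  (∑ i, x i = ∑ i, y i) ∧ ∀ k ≤ n, topSum y k ≤ topSum x k

/-- `f` is Schur-concave on the nonnegative orthant: `x ⪯ y → f x ≥ f y`. -/
def SchurConcave {n : ℕ} (f : (Fin n → ℝ) → ℝ) : Prop :=
  ∀ x y : Fin n → ℝ, (∀ i, 0 ≤ x i) → (∀ i, 0 ≤ y i) → Majorizes y x → f y ≤ f x

/-- `g` is Schur-convex on the nonnegative orthant: `x ⪯ y → g x ≤ g y`. -/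
def SchurConvex {n : ℕ} (g : (Fin n → ℝ) → ℝ) : Prop :=
  ∀ x y : Fin n → ℝ, (∀ i, 0 ≤ x i) → (∀ i, 0 ≤ y i) → Majorizes y x → g x ≤ g y

/-- Cumulative load strictly before online node `t`. -/
def prevLoad {n m : ℕ} (x : Fin m → Fin n → ℝ) (t : Fin m) : Fin n → ℝ :=
  fun i => ∑ s ∈ Finset.univ.filter (fun s => s < t), x s i

/-- Minimum of `v` over the neighborhood of online node `t`. -/
noncomputable def reqMinOn {n m : ℕ} (E : ReqSeq n m) (t : Fin m) (v : Fin n → ℝ) : ℝ :=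
  (E.N t).inf' (E.N_nonempty t) v

/-- `x` is the water-filling allocation trajectory on `E`: at each arrival `t`,
`x t` maximizes the minimum post-allocation load over `N t`. -/
def IsWFAlloc {n m : ℕ} (E : ReqSeq n m) (x : Fin m → Fin n → ℝ) : Prop :=
  Feasible E x ∧
  ∀ t, ∀ y ∈ allocSet n (E.N t) (E.q t),
    reqMinOn E t (fun i => y i + prevLoad x t i) ≤ reqMinOn E t (fun i => x t i + prevLoad x t i)

-- The load vector produced by water-filling (via choice; the trajectory exists and is unique).
open Classical in
noncomputable def wfLoad {n m : ℕ} (E : ReqSeq n m) : Fin n → ℝ :=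
  if h : ∃ x, IsWFAlloc E x then ∑ t, h.choose t else 0

/-- `ℓ` is the majorization-minimal element of `Δ(E)`. -/
def IsOpt {n m : ℕ} (E : ReqSeq n m) (ℓ : Fin n → ℝ) : Prop :=
  ℓ ∈ loads E ∧ ∀ ℓ' ∈ loads E, Majorizes ℓ' ℓ

-- `OPT(E)`, the majorization-minimal feasible load vector (via choice).
open Classical in
noncomputable def optLoad {n m : ℕ} (E : ReqSeq n m) : Fin n → ℝ :=
  if h : ∃ ℓ, IsOpt E ℓ then h.choose else 0

/-- A request sequence is nested if `N 1 ⊇ N 2 ⊇ ⋯ ⊇ N m`. -/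
def IsNested {n m : ℕ} (E : ReqSeq n m) : Prop :=
  ∀ s t : Fin m, s ≤ t → E.N t ⊆ E.N s

/-- `E_{n,m,q}`: request sequences with total quantity `q`. -/
def seqs (n m : ℕ) (q : ℝ) : Set (ReqSeq n m) := {E | ∑ t, E.q t = q}

/-- The harmonic-series matrix applied to a vector: `(Hℓ)(i) = Σ_{j ≤ i} ℓ(j)/(n − j + 1)`
(in 1-indexed notation). -/
noncomputable def Hvec (n : ℕ) (ℓ : Fin n → ℝ) : Fin n → ℝ :=
  fun i => ∑ j ∈ Finset.univ.filter (fun j => j ≤ i), ℓ j / ((n - (j : ℕ) : ℕ) : ℝ)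

/-- The water-filling height of online node `t`: the common post-allocation load of
the offline nodes in the support of `x t`. -/
noncomputable def height {n m : ℕ} (x : Fin m → Fin n → ℝ) (t : Fin m) : ℝ :=
  sSup {c | ∃ i, 0 < x t i ∧ c = x t i + prevLoad x t i}

/-! The water-filling allocation raises every node it touches to a common level `h` and leaves
every node of `N` at load at least `h`: otherwise spreading a little mass from a node above `h`
evenly over `N` would raise the minimum. For `x* + ℓ` to be majorization-minimal it suffices to
compare the functions `θ ↦ ∑ᵢ (wᵢ - θ)⁺`, because `topSum w k = min_θ (k θ + ∑ᵢ (wᵢ - θ)⁺)`; the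
comparison holds because each coordinate of `x* + ℓ` lies between `min h (z + ℓ)ᵢ` and
`max h (z + ℓ)ᵢ`. Conversely, any `z` with `z(j) > x*(j)` puts strictly more load than `x*` on
the `x*`-top set `{j} ∪ {i | (x* + ℓ)ᵢ > (x* + ℓ)ⱼ}`, so `z + ℓ` is not majorized by `x* + ℓ`. -/

section TopSum

variable {n : ℕ} (x : Fin n → ℝ)

theorem exists_topSum_eq_sum {k : ℕ} (hk : k ≤ n) :
    ∃ S : Finset (Fin n), S.card = k ∧
      (∀ T : Finset (Fin n), T.card = k → ∑ i ∈ T, x i ≤ ∑ i ∈ S, x i) ∧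
      topSum x k = ∑ i ∈ S, x i := by
  have hne : (univ.powersetCard k : Finset (Finset (Fin n))).Nonempty :=
    powersetCard_nonempty.mpr (by simpa using hk)
  obtain ⟨S, hS, hSmax⟩ := exists_max_image (univ.powersetCard k) (fun s => ∑ i ∈ s, x i) hne
  have hScard : S.card = k := (mem_powersetCard.mp hS).2
  have hbound : ∀ T : Finset (Fin n), T.card = k → ∑ i ∈ T, x i ≤ ∑ i ∈ S, x i :=
    fun T hT => hSmax T (mem_powersetCard.mpr ⟨subset_univ T, hT⟩)
  refine ⟨S, hScard, hbound, IsGreatest.csSup_eq ⟨⟨S, hScard, rfl⟩, ?_⟩⟩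
  rintro _ ⟨T, hT, rfl⟩
  exact hbound T hT

theorem topSum_zero : topSum x 0 = 0 := by
  obtain ⟨S, hS, -, heq⟩ := exists_topSum_eq_sum x (Nat.zero_le n)
  rw [heq, card_eq_zero.mp hS, sum_empty]

theorem sum_le_topSum (T : Finset (Fin n)) : ∑ i ∈ T, x i ≤ topSum x T.card := by
  obtain ⟨S, -, hmax, heq⟩ := exists_topSum_eq_sum x (by simpa using T.card_le_univ)
  exact heq ▸ hmax T rfl

theorem topSum_le {k : ℕ} (hk : k ≤ n) {c : ℝ}
    (h : ∀ T : Finset (Fin n), T.card = k → ∑ i ∈ T, x i ≤ c) : topSum x k ≤ c := by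
  obtain ⟨S, hS, -, heq⟩ := exists_topSum_eq_sum x hk
  exact heq ▸ h S hS

theorem topSum_le_mul_add_sum_max {k : ℕ} (hk : k ≤ n) (θ : ℝ) :
    topSum x k ≤ k * θ + ∑ i, max (x i - θ) 0 := by
  refine topSum_le x hk fun T hT => ?_
  calc ∑ i ∈ T, x i ≤ ∑ i ∈ T, (θ + max (x i - θ) 0) :=
        sum_le_sum fun i _ => by linarith [le_max_left (x i - θ) 0]
    _ = k * θ + ∑ i ∈ T, max (x i - θ) 0 := by
        rw [sum_add_distrib, sum_const, hT, nsmul_eq_mul]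
    _ ≤ k * θ + ∑ i, max (x i - θ) 0 :=
        add_le_add_right (sum_le_sum_of_subset_of_nonneg (subset_univ T)
          fun i _ _ => le_max_right (x i - θ) 0) _

/-- The bound `topSum_le_mul_add_sum_max` is attained at `θ` the smallest entry of a
maximizing `k`-set. -/
theorem exists_mul_add_sum_max_le_topSum {k : ℕ} (hk0 : 0 < k) (hk : k ≤ n) :
    ∃ θ : ℝ, k * θ + ∑ i, max (x i - θ) 0 ≤ topSum x k := by
  obtain ⟨S, hcard, hmax, heq⟩ := exists_topSum_eq_sum x hk
  have hSne : S.Nonempty := card_pos.mp (hcard ▸ hk0)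
  obtain ⟨j, hj, hθ⟩ := S.exists_mem_eq_inf' hSne x
  set θ := S.inf' hSne x
  have hin : ∀ i ∈ S, θ ≤ x i := fun i hi => inf'_le x hi
  have hout : ∀ i ∉ S, x i ≤ θ := by
    intro i hi
    by_contra! hlt
    have hi' : i ∉ S.erase j := fun h => hi (mem_of_mem_erase h)
    have hswap := hmax (insert i (S.erase j)) (by
      rw [card_insert_of_notMem hi', card_erase_of_mem hj, hcard]; omega)
    rw [sum_insert hi', sum_erase_eq_sub hj] at hswap
    linarith
  have hS : ∑ i ∈ S, max (x i - θ) 0 = ∑ i ∈ S, x i - k * θ := by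
    rw [sum_congr rfl fun i hi => max_eq_left (sub_nonneg.mpr (hin i hi)), sum_sub_distrib,
      sum_const, hcard, nsmul_eq_mul]
  have hSc : ∑ i ∈ Sᶜ, max (x i - θ) 0 = 0 :=
    sum_eq_zero fun i hi => max_eq_right (sub_nonpos.mpr (hout i (mem_compl.mp hi)))
  refine ⟨θ, ?_⟩
  rw [heq, ← sum_add_sum_compl S, hS, hSc]
  linarith

theorem topSum_le_topSum_of_sum_max_le {y : Fin n → ℝ}
    (h : ∀ θ : ℝ, ∑ i, max (x i - θ) 0 ≤ ∑ i, max (y i - θ) 0) {k : ℕ} (hk : k ≤ n) :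
    topSum x k ≤ topSum y k := by
  rcases k.eq_zero_or_pos with rfl | hk0
  · rw [topSum_zero, topSum_zero]
  · obtain ⟨θ, hθ⟩ := exists_mul_add_sum_max_le_topSum y hk0 hk
    linarith [topSum_le_mul_add_sum_max x hk θ, h θ]

theorem topSum_card_eq_sum {K : Finset (Fin n)} {c : ℝ} (hin : ∀ i ∈ K, c ≤ x i)
    (hout : ∀ i ∉ K, x i ≤ c) : topSum x K.card = ∑ i ∈ K, x i := by
  refine le_antisymm (topSum_le x (by simpa using K.card_le_univ) fun T hT => ?_)
    (sum_le_topSum x K)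
  have hcard : (T \ K).card = (K \ T).card := by
    have := card_sdiff_add_card_inter T K
    have := card_sdiff_add_card_inter K T
    rw [inter_comm] at this
    omega
  have hswap : ∑ i ∈ T \ K, x i ≤ ∑ i ∈ K \ T, x i := calc
    ∑ i ∈ T \ K, x i ≤ (T \ K).card • c :=
        sum_le_card_nsmul _ _ _ fun i hi => hout i (mem_sdiff.mp hi).2
    _ = (K \ T).card • c := by rw [hcard]
    _ ≤ ∑ i ∈ K \ T, x i :=
        card_nsmul_le_sum _ _ _ fun i hi => hin i (mem_sdiff.mp hi).1
  rw [← sum_inter_add_sum_sdiff T K, ← sum_inter_add_sum_sdiff K T, inter_comm]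
  linarith

end TopSum

section Majorizes

variable {n : ℕ} {u v : Fin n → ℝ}

theorem majorizes_of_min_le_of_le_max (hsum : ∑ i, v i = ∑ i, u i) (h : ℝ)
    (hlo : ∀ i, min h (v i) ≤ u i) (hhi : ∀ i, u i ≤ max h (v i)) : Majorizes v u := by
  refine ⟨hsum, fun k hk => topSum_le_topSum_of_sum_max_le u (fun θ => ?_) hk⟩
  rcases le_total h θ with hθ | hθ
  · refine sum_le_sum fun i _ => max_le ?_ (le_max_right _ _)
    rcases max_choice h (v i) with hm | hm <;> have := hm ▸ hhi i
    · exact le_max_of_le_right (by linarith)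
    · exact le_max_of_le_left (by linarith)
  · have hneg : ∀ i, max (θ - u i) 0 ≤ max (θ - v i) 0 := fun i => by
      refine max_le ?_ (le_max_right _ _)
      rcases min_choice h (v i) with hm | hm <;> have := hm ▸ hlo i
      · exact le_max_of_le_right (by linarith)
      · exact le_max_of_le_left (by linarith)
    have hdecomp : ∀ w : Fin n → ℝ,
        ∑ i, max (w i - θ) 0 = ∑ i, (w i - θ) + ∑ i, max (θ - w i) 0 := fun w => by
      rw [← sum_add_distrib]
      refine sum_congr rfl fun i _ => ?_
      have := max_zero_sub_eq_self (w i - θ)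
      rw [neg_sub] at this
      linarith
    have hshift : ∑ i, (u i - θ) = ∑ i, (v i - θ) := by rw [sum_sub_distrib, sum_sub_distrib, hsum]
    rw [hdecomp u, hdecomp v, hshift]
    linarith [sum_le_sum fun i (_ : i ∈ univ) => hneg i]

theorem Majorizes.le_of_forall_lt_imp_le (huv : Majorizes u v) (j : Fin n)
    (hj : ∀ i, u j < u i → u i ≤ v i) : v j ≤ u j := by
  by_contra! hlt
  set K := insert j (univ.filter fun i => u j < u i)
  have hmem : ∀ i, i ∈ K ↔ i = j ∨ u j < u i := by simp [K]
  have hin : ∀ i ∈ K, u j ≤ u i := fun i hi => by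
    rcases (hmem i).mp hi with rfl | hi
    exacts [le_rfl, hi.le]
  have hout : ∀ i ∉ K, u i ≤ u j := fun i hi => by
    rw [hmem, not_or, not_lt] at hi
    exact hi.2
  have hKlt : ∑ i ∈ K, u i < ∑ i ∈ K, v i := by
    refine sum_lt_sum (fun i hi => ?_) ⟨j, mem_insert_self _ _, hlt⟩
    rcases (hmem i).mp hi with rfl | hi
    exacts [hlt.le, hj i hi]
  linarith [huv.2 K.card (by simpa using K.card_le_univ), topSum_card_eq_sum u hin hout,
    sum_le_topSum v K]

end Majorizes

section WaterFilling

variable {n : ℕ} {N : Finset (Fin n)} {q : ℝ} {x ℓ : Fin n → ℝ}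

theorem mem_of_pos_of_mem_allocSet (hx : x ∈ allocSet n N q) {i : Fin n} (hi : 0 < x i) :
    i ∈ N :=
  by_contra fun h => hi.ne' (hx.2.1 i h)

theorem spread_mem_allocSet (hx : x ∈ allocSet n N q) {i : Fin n} (hi : i ∈ N) {ε : ℝ}
    (hε : 0 ≤ ε) (hεx : ε ≤ x i) :
    (fun j => x j - (Pi.single i ε : Fin n → ℝ) j + if j ∈ N then ε / #N else 0) ∈
      allocSet n N q := by
  obtain ⟨hx0, hxN, hxsum⟩ := hx
  have hcard : (#N : ℝ) ≠ 0 := by exact_mod_cast (card_pos.mpr ⟨i, hi⟩).ne'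
  refine ⟨fun j => ?_, fun j hj => ?_, ?_⟩
  · have : 0 ≤ (if j ∈ N then ε / #N else 0) := by split_ifs <;> positivity
    rcases eq_or_ne j i with rfl | hji
    · simp only [Pi.single_eq_same]; linarith
    · simp only [Pi.single_eq_of_ne hji]; linarith [hx0 j]
  · have hji : j ≠ i := fun h => hj (h ▸ hi)
    simp [hxN j hj, hj, Pi.single_eq_of_ne hji]
  · rw [sum_add_distrib, sum_sub_distrib, sum_pi_single', sum_ite_mem, univ_inter, sum_const,
      nsmul_eq_mul, mul_div_cancel₀ _ hcard, hxsum]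
    simp

theorem load_eq_inf'_of_pos (hN : N.Nonempty) (hx : x ∈ allocSet n N q)
    (hmax : ∀ y ∈ allocSet n N q,
      N.inf' hN (fun i => y i + ℓ i) ≤ N.inf' hN (fun i => x i + ℓ i))
    {i : Fin n} (hi : 0 < x i) : x i + ℓ i = N.inf' hN (fun j => x j + ℓ j) := by
  have hiN := mem_of_pos_of_mem_allocSet hx hi
  refine le_antisymm ?_ (inf'_le _ hiN)
  by_contra! hgt
  set m := N.inf' hN (fun j => x j + ℓ j)
  set ε := min (x i) ((x i + ℓ i - m) / 2)
  have hε : 0 < ε := lt_min hi (by linarith)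
  have hδ : 0 < ε / #N := div_pos hε (by exact_mod_cast card_pos.mpr hN)
  refine (hmax _ (spread_mem_allocSet hx hiN hε.le (min_le_left _ _))).not_gt ?_
  rw [lt_inf'_iff]
  intro j hj
  simp only [hj, if_true]
  rcases eq_or_ne j i with rfl | hji
  · simp only [Pi.single_eq_same]
    linarith [min_le_right (x j) ((x j + ℓ j - m) / 2)]
  · simp only [Pi.single_eq_of_ne hji]
    linarith [inf'_le (fun j => x j + ℓ j) hj]

theorem majorizes_add_of_level (h : ℝ) (hlevel : ∀ i ∈ N, h ≤ x i + ℓ i)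
    (hfill : ∀ i, 0 < x i → x i + ℓ i = h) (hx : x ∈ allocSet n N q) {z : Fin n → ℝ}
    (hz : z ∈ allocSet n N q) : Majorizes (fun i => z i + ℓ i) (fun i => x i + ℓ i) := by
  refine majorizes_of_min_le_of_le_max (by simp only [sum_add_distrib, hz.2.2, hx.2.2]) h
    (fun i => ?_) (fun i => ?_)
  · by_cases hi : i ∈ N
    · exact min_le_of_left_le (hlevel i hi)
    · simp [hz.2.1 i hi, hx.2.1 i hi]
  · rcases (hx.1 i).lt_or_eq with hpos | hzero
    · exact (hfill i hpos).le.trans (le_max_left _ _)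
    · exact le_max_of_le_right (by linarith [hz.1 i])

theorem le_of_majorizes_add (h : ℝ) (hlevel : ∀ i ∈ N, h ≤ x i + ℓ i)
    (hfill : ∀ i, 0 < x i → x i + ℓ i = h) (hx : x ∈ allocSet n N q) {z : Fin n → ℝ}
    (hz : z ∈ allocSet n N q)
    (hmaj : Majorizes (fun i => x i + ℓ i) (fun i => z i + ℓ i)) (j : Fin n) : z j ≤ x j := by
  by_cases hj : j ∈ N
  · suffices z j + ℓ j ≤ x j + ℓ j by linarith
    refine hmaj.le_of_forall_lt_imp_le j fun i hlt => ?_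
    have hxi : x i = 0 := by
      by_contra hne
      linarith [hfill i ((hx.1 i).lt_of_ne' hne), hlevel j hj]
    linarith [hz.1 i]
  · rw [hz.2.1 j hj, hx.2.1 j hj]

end WaterFilling

theorem wf_step_properties_general (n : ℕ) (N : Finset (Fin n)) (hN : N.Nonempty)
    (q : ℝ) (ℓ : Fin n → ℝ)
    (xstar : Fin n → ℝ) (hx : xstar ∈ allocSet n N q)
    (hmax : ∀ y ∈ allocSet n N q,
      N.inf' hN (fun i => y i + ℓ i) ≤ N.inf' hN (fun i => xstar i + ℓ i)) :
    (∀ z ∈ allocSet n N q,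
      Majorizes (fun i => z i + ℓ i) (fun i => xstar i + ℓ i)) ∧
    (∀ z ∈ allocSet n N q,
      (∀ w ∈ allocSet n N q, Majorizes (fun i => w i + ℓ i) (fun i => z i + ℓ i)) →
      z = xstar) ∧
    (∀ i ∈ N, ∀ j ∈ N, 0 < xstar i → 0 < xstar j → xstar i + ℓ i = xstar j + ℓ j) := by
  have hlevel : ∀ i ∈ N, N.inf' hN (fun j => xstar j + ℓ j) ≤ xstar i + ℓ i :=
    fun i hi => inf'_le _ hi
  have hfill : ∀ i, 0 < xstar i → xstar i + ℓ i = N.inf' hN (fun j => xstar j + ℓ j) :=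
    fun i hi => load_eq_inf'_of_pos hN hx hmax hi
  refine ⟨fun z hz => majorizes_add_of_level _ hlevel hfill hx hz, fun z hz hmin => ?_,
    fun i _ j _ hi hj => (hfill i hi).trans (hfill j hj).symm⟩
  have hle := le_of_majorizes_add _ hlevel hfill hx hz (hmin xstar hx)
  funext j
  exact (sum_eq_sum_iff_of_le fun i _ => hle i).mp (hz.2.2.trans hx.2.2.symm) j (mem_univ j)

/-- **Observation (Properties of water-filling).** For any nonempty `N ⊆ [n]`, `q > 0`,
and load vector `ℓ ≥ 0`, the water-filling allocation `x*` (the maximizer of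
`min_{i∈N}(x(i) + ℓ(i))` over `Δ(N,q)`) satisfies: `x* + ℓ` is the unique
majorization-minimal vector in `{x + ℓ : x ∈ Δ(N,q)}`, and the post-allocation loads of
all nodes in the support of `x*` are equal. -/
theorem wf_step_properties (n : ℕ) (N : Finset (Fin n)) (hN : N.Nonempty)
    (q : ℝ) (hq : 0 < q) (ℓ : Fin n → ℝ) (hℓ : ∀ i, 0 ≤ ℓ i)
    (xstar : Fin n → ℝ) (hx : xstar ∈ allocSet n N q)
    (hmax : ∀ y ∈ allocSet n N q,
      N.inf' hN (fun i => y i + ℓ i) ≤ N.inf' hN (fun i => xstar i + ℓ i)) :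
    (∀ z ∈ allocSet n N q,
      Majorizes (fun i => z i + ℓ i) (fun i => xstar i + ℓ i)) ∧
    (∀ z ∈ allocSet n N q,
      (∀ w ∈ allocSet n N q, Majorizes (fun i => w i + ℓ i) (fun i => z i + ℓ i)) →
      z = xstar) ∧
    (∀ i ∈ N, ∀ j ∈ N, 0 < xstar i → 0 < xstar j → xstar i + ℓ i = xstar j + ℓ j) :=
  wf_step_properties_general n N hN q ℓ xstar hx hmax
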